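/- Suppose the shear translation relation u∞_s(x̂; D_a) = u∞_s(x̂; D) e^{i(k_p d − k_s x̂)·a} holds for all x̂ ∈ S², with k_p, k_s > 0 and d ∈ S² fixed, and u∞_s(·; D) is not identically zero on S². If u∞_s(x̂; D_a) = u∞_s(x̂; D) for all x̂ ∈ S², then a = 0. -/
import Mathlib


open scoped RealInnerProductSpace

set_option maxHeartbeats 1600000

/-- Lemma 3.3, S-part: Assume the shear translation relation
u∞_s(x̂; D_a) = u∞_s(x̂; D) e^{i(k_p d − k_s x̂)·a} for all x̂ ∈ S², with
k_p, k_s > 0, d ∈ S², and u∞_s(·; D) a nonzero continuous field on S². If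
u∞_s(x̂; D_a) = u∞_s(x̂; D) for all x̂ ∈ S², then a = 0.  Here `us a` denotes
the S-part far-field pattern of the translate D_a = a + D. -/
theorem translated_scatterer_unique_S
    (d : EuclideanSpace ℝ (Fin 3)) (hd : ‖d‖ = 1)
    (kp ks : ℝ) (hkp : 0 < kp) (hks : 0 < ks)
    (us : EuclideanSpace ℝ (Fin 3) → EuclideanSpace ℝ (Fin 3) → Fin 3 → ℂ)
    (a : EuclideanSpace ℝ (Fin 3))
    (htrans : ∀ (x : EuclideanSpace ℝ (Fin 3)), ‖x‖ = 1 →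
      ∀ i, us a x i =
        us 0 x i * Complex.exp (Complex.I * ((⟪kp • d - ks • x, a⟫ : ℝ) : ℂ)))
    (hcont : Continuous (us 0))
    (hne : ∃ x : EuclideanSpace ℝ (Fin 3), ‖x‖ = 1 ∧ us 0 x ≠ 0)
    (heq : ∀ x : EuclideanSpace ℝ (Fin 3), ‖x‖ = 1 → us a x = us 0 x) :
    a = 0 := by
  obtain ⟨x₀, hx₀, hx₀ne⟩ := hne
  -- pick a component where us 0 x₀ is nonzero
  obtain ⟨i, hi⟩ := Function.ne_iff.mp hx₀ne
  -- key: the phase is a multiple of 2π wherever us 0 x i ≠ 0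
  have hphase : ∀ x : EuclideanSpace ℝ (Fin 3), ‖x‖ = 1 → us 0 x i ≠ 0 →
      ∃ n : ℤ, (⟪kp • d - ks • x, a⟫ : ℝ) = n * (2 * Real.pi) := by
    intro x hx hxi
    have h1 := htrans x hx i
    rw [heq x hx] at h1
    have h2 : Complex.exp (Complex.I * ((⟪kp • d - ks • x, a⟫ : ℝ) : ℂ)) = 1 := by
      rcases mul_right_eq_self₀.mp h1.symm with h | h
      · exact h
      · exact absurd h hxi
    obtain ⟨n, hn⟩ := Complex.exp_eq_one_iff.mp h2
    refine ⟨n, ?_⟩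
    have hI : ((⟪kp • d - ks • x, a⟫ : ℝ) : ℂ) = (n : ℂ) * (2 * Real.pi) := by
      have : Complex.I * ((⟪kp • d - ks • x, a⟫ : ℝ) : ℂ)
          = Complex.I * ((n : ℂ) * (2 * Real.pi)) := by rw [hn]; ring
      exact mul_left_cancel₀ Complex.I_ne_zero this
    exact_mod_cast hI
  -- main geometric step
  have key : ∀ v : EuclideanSpace ℝ (Fin 3), ‖v‖ = 1 → (⟪x₀, v⟫ : ℝ) = 0 →
      (⟪x₀, a⟫ : ℝ) = 0 ∧ (⟪v, a⟫ : ℝ) = 0 := by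
    intro v hv hov
    set α : ℝ := ⟪x₀, a⟫ with hα
    set β : ℝ := ⟪v, a⟫ with hβ
    clear_value α β
    -- the great-circle curve through x₀ in direction v
    have hxt : ∀ t : ℝ, ‖Real.cos t • x₀ + Real.sin t • v‖ = 1 := by
      intro t
      have hsq : ‖Real.cos t • x₀ + Real.sin t • v‖ ^ 2 = 1 := by
        rw [norm_add_sq_real]
        rw [real_inner_smul_left, real_inner_smul_right, hov]
        simp only [norm_smul, hx₀, hv, Real.norm_eq_abs, mul_one, mul_zero, sub_zero,
          mul_pow, sq_abs, one_pow]
        nlinarith [Real.sin_sq_add_cos_sq t]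
      have hnn := norm_nonneg (Real.cos t • x₀ + Real.sin t • v)
      have hfac : (‖Real.cos t • x₀ + Real.sin t • v‖ - 1) *
          (‖Real.cos t • x₀ + Real.sin t • v‖ + 1) = 0 := by nlinarith
      rcases mul_eq_zero.mp hfac with h | h
      · linarith
      · linarith
    -- the phase along the curve
    have hG : ∀ t : ℝ, us 0 (Real.cos t • x₀ + Real.sin t • v) i ≠ 0 →
        ∃ n : ℤ, kp * ⟪d, a⟫ - ks * (Real.cos t * α + Real.sin t * β)
          = n * (2 * Real.pi) := by
      intro t ht
      obtain ⟨n, hn⟩ := hphase _ (hxt t) ht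
      refine ⟨n, ?_⟩
      rw [hα, hβ, ← hn]
      rw [inner_sub_left, real_inner_smul_left, real_inner_smul_left,
        inner_add_left, real_inner_smul_left, real_inner_smul_left]
    -- nonvanishing near t = 0
    have hfc : Continuous fun t : ℝ => us 0 (Real.cos t • x₀ + Real.sin t • v) i :=
      ((continuous_apply i).comp hcont).comp
        ((Real.continuous_cos.smul continuous_const).add
          (Real.continuous_sin.smul continuous_const))
    have h00 : us 0 (Real.cos 0 • x₀ + Real.sin 0 • v) i ≠ 0 := by
      simpa using hi
    have hev : ∀ᶠ t in nhds (0 : ℝ),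
        us 0 (Real.cos t • x₀ + Real.sin t • v) i ≠ 0 :=
      hfc.continuousAt.eventually_ne h00
    obtain ⟨ε, hε, hball⟩ := Metric.eventually_nhds_iff.mp hev
    -- choose a small positive t₀
    have hden : 0 < ks * (|α| + |β| + 1) := by positivity
    obtain ⟨t₀, ht₀pos, ht₀ε, ht₀1, ht₀pi⟩ : ∃ t₀ : ℝ, 0 < t₀ ∧ t₀ < ε ∧ t₀ ≤ 1 ∧
        ks * (t₀ * (|α| + |β| + 1)) ≤ Real.pi := by
      refine ⟨min (ε / 2) (min 1 (Real.pi / (ks * (|α| + |β| + 1)))), ?_, ?_, ?_, ?_⟩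
      · exact lt_min (by linarith) (lt_min one_pos (by positivity))
      · exact lt_of_le_of_lt (min_le_left _ _) (by linarith)
      · exact le_trans (min_le_right _ _) (min_le_left _ _)
      · have h1 : min (ε / 2) (min 1 (Real.pi / (ks * (|α| + |β| + 1))))
            ≤ Real.pi / (ks * (|α| + |β| + 1)) :=
          le_trans (min_le_right _ _) (min_le_right _ _)
        calc ks * (min (ε / 2) (min 1 (Real.pi / (ks * (|α| + |β| + 1)))) * (|α| + |β| + 1))
            = min (ε / 2) (min 1 (Real.pi / (ks * (|α| + |β| + 1)))) * (ks * (|α| + |β| + 1)) := by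
              ring
          _ ≤ (Real.pi / (ks * (|α| + |β| + 1))) * (ks * (|α| + |β| + 1)) :=
              mul_le_mul_of_nonneg_right h1 (le_of_lt hden)
          _ = Real.pi := by field_simp
    have hpi3 : (1 : ℝ) < Real.pi := by linarith [Real.pi_gt_three]
    -- get the three integer relations
    have hd0 : ∀ t : ℝ, |t| < ε →
        ∃ n : ℤ, kp * ⟪d, a⟫ - ks * (Real.cos t * α + Real.sin t * β)
          = n * (2 * Real.pi) := by
      intro t ht
      apply hG
      apply hball
      simpa [Real.dist_eq] using ht
    have habs : |t₀| < ε := by rw [abs_of_pos ht₀pos]; exact ht₀ε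
    obtain ⟨n₁, hn₁⟩ := hd0 t₀ habs
    obtain ⟨n₂, hn₂⟩ := hd0 (-t₀) (by rwa [abs_neg])
    obtain ⟨n₀, hn₀⟩ := hd0 0 (by simpa using lt_of_le_of_lt (abs_nonneg t₀) habs)
    rw [Real.cos_neg, Real.sin_neg] at hn₂
    simp only [Real.cos_zero, Real.sin_zero] at hn₀
    -- sin bounds
    have hsin_pos : 0 < Real.sin t₀ :=
      Real.sin_pos_of_pos_of_lt_pi ht₀pos (by linarith)
    have hsin_le : Real.sin t₀ ≤ t₀ := Real.sin_le ht₀pos.le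
    -- 1 - cos t₀ bounds
    have hcos_lt : Real.cos t₀ < 1 := by
      rcases lt_or_eq_of_le (Real.cos_le_one t₀) with h | h
      · exact h
      · exfalso
        obtain ⟨n, hn⟩ := (Real.cos_eq_one_iff t₀).mp h
        have hpi := Real.pi_pos
        rcases lt_trichotomy n 0 with hneg | hzero | hpos
        · have hn1 : n ≤ -1 := by omega
          have : (n : ℝ) ≤ -1 := by exact_mod_cast hn1
          nlinarith
        · rw [hzero] at hn; simp at hn; linarith
        · have : (1 : ℝ) ≤ (n : ℝ) := by exact_mod_cast hpos
          nlinarith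
    have hcos_le : 1 - Real.cos t₀ ≤ t₀ := by
      have h1 : Real.sin (t₀ / 2) ≤ t₀ / 2 := Real.sin_le (by linarith)
      have h2 : 0 ≤ Real.sin (t₀ / 2) :=
        Real.sin_nonneg_of_nonneg_of_le_pi (by linarith) (by linarith)
      have h3 := Real.sin_sq_add_cos_sq (t₀ / 2)
      have h4 : Real.cos t₀ = 2 * Real.cos (t₀ / 2) ^ 2 - 1 := by
        have := Real.cos_two_mul (t₀ / 2)
        rw [show 2 * (t₀ / 2) = t₀ by ring] at this
        linarith
      nlinarith
    generalize hC : (⟪d, a⟫ : ℝ) = C at hn₁ hn₂ hn₀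
    -- β = 0
    have hβ0 : β = 0 := by
      have heq1 : ks * Real.sin t₀ * β = ((n₂ - n₁ : ℤ) : ℝ) * Real.pi := by
        push_cast
        linear_combination (hn₂ - hn₁) / 2
      have hb : |ks * Real.sin t₀ * β| < Real.pi := by
        rw [abs_mul, abs_mul, abs_of_pos hks, abs_of_pos hsin_pos]
        calc ks * Real.sin t₀ * |β| = ks * (Real.sin t₀ * |β|) := by ring
          _ ≤ ks * (t₀ * |β|) :=
              mul_le_mul_of_nonneg_left
                (mul_le_mul_of_nonneg_right hsin_le (abs_nonneg β)) hks.le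
          _ < ks * (t₀ * (|α| + |β| + 1)) := by
              have h5 : |β| < |α| + |β| + 1 := by linarith [abs_nonneg α]
              exact mul_lt_mul_of_pos_left
                (mul_lt_mul_of_pos_left h5 ht₀pos) hks
          _ ≤ Real.pi := ht₀pi
      rw [heq1, abs_mul, abs_of_pos Real.pi_pos] at hb
      have h6 : |((n₂ - n₁ : ℤ) : ℝ)| < 1 := by
        by_contra hcon
        push_neg at hcon
        nlinarith [Real.pi_pos]
      have h7 : ((|n₂ - n₁| : ℤ) : ℝ) < 1 := by rw [Int.cast_abs]; exact h6
      have h8 : |n₂ - n₁| < 1 := by exact_mod_cast h7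
      have hn12 : n₂ - n₁ = 0 := by
        have := abs_lt.mp h8
        omega
      rw [hn12] at heq1
      have h0 : ks * Real.sin t₀ * β = 0 := by simpa using heq1
      rcases mul_eq_zero.mp h0 with h | h
      · exact absurd h (mul_pos hks hsin_pos).ne'
      · exact h
    -- α = 0
    have hα0 : α = 0 := by
      have heq2 : ks * (1 - Real.cos t₀) * α = ((n₁ + n₂ - 2 * n₀ : ℤ) : ℝ) * Real.pi := by
        push_cast
        linear_combination (hn₁ + hn₂) / 2 - hn₀
      have hb : |ks * (1 - Real.cos t₀) * α| < Real.pi := by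
        rw [abs_mul, abs_mul, abs_of_pos hks, abs_of_pos (by linarith : (0:ℝ) < 1 - Real.cos t₀)]
        calc ks * (1 - Real.cos t₀) * |α| = ks * ((1 - Real.cos t₀) * |α|) := by ring
          _ ≤ ks * (t₀ * |α|) :=
              mul_le_mul_of_nonneg_left
                (mul_le_mul_of_nonneg_right hcos_le (abs_nonneg α)) hks.le
          _ < ks * (t₀ * (|α| + |β| + 1)) := by
              have h5 : |α| < |α| + |β| + 1 := by linarith [abs_nonneg β]
              exact mul_lt_mul_of_pos_left
                (mul_lt_mul_of_pos_left h5 ht₀pos) hks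
          _ ≤ Real.pi := ht₀pi
      rw [heq2, abs_mul, abs_of_pos Real.pi_pos] at hb
      have h6 : |((n₁ + n₂ - 2 * n₀ : ℤ) : ℝ)| < 1 := by
        by_contra hcon
        push_neg at hcon
        nlinarith [Real.pi_pos]
      have h7 : ((|n₁ + n₂ - 2 * n₀| : ℤ) : ℝ) < 1 := by rw [Int.cast_abs]; exact h6
      have h8 : |n₁ + n₂ - 2 * n₀| < 1 := by exact_mod_cast h7
      have hn' : n₁ + n₂ - 2 * n₀ = 0 := by
        have := abs_lt.mp h8
        omega
      rw [hn'] at heq2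
      have h0 : ks * (1 - Real.cos t₀) * α = 0 := by simpa using heq2
      rcases mul_eq_zero.mp h0 with h | h
      · exact absurd h (mul_pos hks (by linarith : (0:ℝ) < 1 - Real.cos t₀)).ne'
      · exact h
    exact ⟨hα0, hβ0⟩
  -- existence of a unit vector orthogonal to x₀
  have hx₀0 : x₀ ≠ 0 := by
    intro h; rw [h] at hx₀; simp at hx₀
  have hK : (ℝ ∙ x₀)ᗮ ≠ ⊥ := by
    intro h
    rw [Submodule.orthogonal_eq_bot_iff] at h
    have h1 : Module.finrank ℝ (ℝ ∙ x₀) = 1 := finrank_span_singleton hx₀0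
    have h2 : Module.finrank ℝ (EuclideanSpace ℝ (Fin 3)) = 3 := by
      simp [finrank_euclideanSpace]
    rw [h] at h1
    rw [finrank_top] at h1
    omega
  obtain ⟨w, hwmem, hw0⟩ := (Submodule.ne_bot_iff _).mp hK
  have hworth : (⟪x₀, w⟫ : ℝ) = 0 := by
    have := (Submodule.mem_orthogonal _ _).mp hwmem x₀ (Submodule.mem_span_singleton_self x₀)
    exact this
  have hwpos : 0 < ‖w‖ := norm_pos_iff.mpr hw0
  have hwnorm : ‖(‖w‖⁻¹ • w : EuclideanSpace ℝ (Fin 3))‖ = 1 := by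
    rw [norm_smul, Real.norm_eq_abs, abs_of_pos (inv_pos.mpr hwpos)]
    exact inv_mul_cancel₀ hwpos.ne'
  have hworth' : (⟪x₀, (‖w‖⁻¹ • w : EuclideanSpace ℝ (Fin 3))⟫ : ℝ) = 0 := by
    rw [real_inner_smul_right, hworth, mul_zero]
  have hα0 := (key _ hwnorm hworth').1
  -- now a ⟂ x₀; if a ≠ 0, apply key with v = a/‖a‖
  by_contra ha
  have hapos : 0 < ‖a‖ := norm_pos_iff.mpr ha
  have hanorm : ‖(‖a‖⁻¹ • a : EuclideanSpace ℝ (Fin 3))‖ = 1 := by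
    rw [norm_smul, Real.norm_eq_abs, abs_of_pos (inv_pos.mpr hapos)]
    exact inv_mul_cancel₀ hapos.ne'
  have haorth : (⟪x₀, (‖a‖⁻¹ • a : EuclideanSpace ℝ (Fin 3))⟫ : ℝ) = 0 := by
    rw [real_inner_smul_right, hα0, mul_zero]
  have hβ0 := (key _ hanorm haorth).2
  rw [real_inner_smul_left, real_inner_self_eq_norm_sq] at hβ0
  have hpos : 0 < ‖a‖⁻¹ * ‖a‖ ^ 2 :=
    mul_pos (inv_pos.mpr hapos) (pow_pos hapos 2)
  linarith
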